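/- Let P carry a pre-Garside structure (atomic partial product satisfying in addition: existence of right lcms and left lcms for pairs of atoms having common multiples, closure of P under multiplication by these lcms, and cancellativity of elements of P in M(P)). Then any two elements of P have a left greatest common divisor in P. -/

import Mathlib

/-- An atomic partial product on a set `P`: a partial product (with values in
`Option P`) with a unit, associativity, a finite set of atoms, and an `ℕ`-grading. -/
structure AtomicPartialProduct (P : Type*) where
  mul : P → P → Option P
  one : P
  one_mul : ∀ a, mul one a = some a
  mul_one : ∀ a, mul a one = some a
  /-- `ab` and `(ab)c` are defined iff `bc` and `a(bc)` are defined. -/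
  assoc_defined : ∀ a b c : P,
    (∃ ab, mul a b = some ab ∧ (mul ab c).isSome) ↔
    (∃ bc, mul b c = some bc ∧ (mul a bc).isSome)
  /-- When both are defined, `(ab)c = a(bc)`. -/
  assoc : ∀ a b c ab bc x y : P, mul a b = some ab → mul b c = some bc →
    mul ab c = some x → mul a bc = some y → x = y
  /-- The product of two non-unit elements is a non-unit. -/
  ne_one_mul : ∀ a b c : P, a ≠ one → b ≠ one → mul a b = some c → c ≠ one
  /-- There are finitely many atoms. -/
  atoms_finite : {p : P | p ≠ one ∧ ∀ a b, a ≠ one → b ≠ one → mul a b ≠ some p}.Finite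
  len : P → ℕ
  len_pos : ∀ p, p ≠ one → 0 < len p
  len_mul : ∀ a b c, mul a b = some c → len c = len a + len b

namespace AtomicPartialProduct

variable {P : Type*} (S : AtomicPartialProduct P)

/-- The set of atoms: non-unit elements which are not products of non-units. -/
def atoms : Set P :=
  {p : P | p ≠ S.one ∧ ∀ a b, a ≠ S.one → b ≠ S.one → S.mul a b ≠ some p}

/-- The defining relations of the monoid `M(P)`: `a · b = c` whenever the partial
product `ab` is defined and equal to `c`. -/
def rel : FreeMonoid P → FreeMonoid P → Prop := fun u v =>
  ∃ a b c : P, S.mul a b = some c ∧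
    u = FreeMonoid.of a * FreeMonoid.of b ∧ v = FreeMonoid.of c

/-- The monoid `M(P)` presented by generators `P` and relations `ab = c` whenever
the partial product is defined. -/
def M := (conGen S.rel).Quotient

instance : Monoid S.M := inferInstanceAs (Monoid (conGen S.rel).Quotient)

/-- The natural map `P → M(P)`. -/
def ι (p : P) : S.M := (conGen S.rel).mk' (FreeMonoid.of p)

/-- `a` left-divides `c` in `P`. -/
def leftDvd (a c : P) : Prop := ∃ b, S.mul a b = some c

/-- `a` right-divides `c` in `P`. -/
def rightDvd (a c : P) : Prop := ∃ b, S.mul b a = some c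

/-- `Δ` is a least common right multiple of `s` and `t` in `P`. -/
def IsRightLcm (s t Δ : P) : Prop :=
  S.leftDvd s Δ ∧ S.leftDvd t Δ ∧ ∀ m, S.leftDvd s m → S.leftDvd t m → S.leftDvd Δ m

/-- `Δ` is a least common left multiple of `s` and `t` in `P`. -/
def IsLeftLcm (s t Δ : P) : Prop :=
  S.rightDvd s Δ ∧ S.rightDvd t Δ ∧ ∀ m, S.rightDvd s m → S.rightDvd t m → S.rightDvd Δ m

end AtomicPartialProduct

/-- A pre-Garside structure: an atomic partial product satisfying the lcm axioms
(iv), (iv'), the closure axiom (v) and the cancellativity axiom (vi). -/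
structure PreGarside (P : Type*) extends AtomicPartialProduct P where
  /-- (iv) two atoms with a common right multiple have a right lcm. -/
  lcm_right : ∀ s ∈ toAtomicPartialProduct.atoms, ∀ t ∈ toAtomicPartialProduct.atoms,
    (∃ m, toAtomicPartialProduct.leftDvd s m ∧ toAtomicPartialProduct.leftDvd t m) →
    ∃ Δ, toAtomicPartialProduct.IsRightLcm s t Δ
  /-- (iv') two atoms with a common left multiple have a left lcm. -/
  lcm_left : ∀ s ∈ toAtomicPartialProduct.atoms, ∀ t ∈ toAtomicPartialProduct.atoms,
    (∃ m, toAtomicPartialProduct.rightDvd s m ∧ toAtomicPartialProduct.rightDvd t m) →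
    ∃ Δ, toAtomicPartialProduct.IsLeftLcm s t Δ
  /-- (v) if `as` and `at` are defined then so is `aΔ_{s,t}`. -/
  mul_lcm_defined : ∀ s ∈ toAtomicPartialProduct.atoms, ∀ t ∈ toAtomicPartialProduct.atoms,
    ∀ Δ a : P, toAtomicPartialProduct.IsRightLcm s t Δ →
    (toAtomicPartialProduct.mul a s).isSome → (toAtomicPartialProduct.mul a t).isSome →
    (toAtomicPartialProduct.mul a Δ).isSome
  /-- (vi) elements of `P` are cancellable in `M(P)` (right cancellation). -/
  cancel_right : ∀ (m : toAtomicPartialProduct.M) (a b : P),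
    toAtomicPartialProduct.ι a * m = toAtomicPartialProduct.ι b * m → a = b
  /-- (vi) elements of `P` are cancellable in `M(P)` (left cancellation). -/
  cancel_left : ∀ (m : toAtomicPartialProduct.M) (a b : P),
    m * toAtomicPartialProduct.ι a = m * toAtomicPartialProduct.ι b → a = b

/-!
A greatest common left divisor of `a` and `b` is obtained as a common left divisor `g` of maximal
length: for any other common left divisor `d`, the right lcm of `d` and `g` is again a common left
divisor of `a` and `b`, and it is a multiple of `g` no longer than `g`, hence equal to `g`.

The real work is the existence of right lcms of any two elements `c`, `d` with a common right
multiple `m`, by induction on the length of `m`. Choosing atoms `s ∣ c` and `t ∣ d` with right lcm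
`Δ`, one forms `lcm(c, Δ)` below the common prefix `s` and then `lcm(lcm(c, Δ), d)` below the common
prefix `t`; both are lcms of elements dividing a strictly shorter element, and the second one is
`lcm(c, d)` because `Δ` divides every common multiple of `c` and `d`. Left cancellativity is what
lets an lcm be transported along a common prefix.
-/

namespace AtomicPartialProduct

variable {P : Type*} {S : AtomicPartialProduct P}

lemma exists_assoc_left {a b c f e : P} (hbc : S.mul b c = some f) (ha : S.mul a f = some e) :
    ∃ d, S.mul a b = some d ∧ S.mul d c = some e := by
  obtain ⟨d, hd, hsome⟩ := (S.assoc_defined a b c).2 ⟨f, hbc, by simp [ha]⟩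
  obtain ⟨x, hx⟩ := Option.isSome_iff_exists.1 hsome
  exact ⟨d, hd, hx.trans (congrArg some (S.assoc a b c d f x e hd hbc hx ha))⟩

lemma exists_assoc_right {a b c d e : P} (hab : S.mul a b = some d) (hc : S.mul d c = some e) :
    ∃ f, S.mul b c = some f ∧ S.mul a f = some e := by
  obtain ⟨f, hf, hsome⟩ := (S.assoc_defined a b c).1 ⟨d, hab, by simp [hc]⟩
  obtain ⟨x, hx⟩ := Option.isSome_iff_exists.1 hsome
  exact ⟨f, hf, hx.trans (congrArg some (S.assoc a b c d f e x hab hf hc hx).symm)⟩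

lemma one_leftDvd (a : P) : S.leftDvd S.one a := ⟨a, S.one_mul a⟩

lemma leftDvd_refl (a : P) : S.leftDvd a a := ⟨S.one, S.mul_one a⟩

lemma leftDvd_of_mul {a b c : P} (h : S.mul a b = some c) : S.leftDvd a c := ⟨b, h⟩

lemma leftDvd_trans {a b c : P} (hab : S.leftDvd a b) (hbc : S.leftDvd b c) : S.leftDvd a c := by
  obtain ⟨x, hx⟩ := hab
  obtain ⟨y, hy⟩ := hbc
  obtain ⟨f, -, hf⟩ := exists_assoc_right hx hy
  exact ⟨f, hf⟩

lemma len_le_of_leftDvd {a b : P} (h : S.leftDvd a b) : S.len a ≤ S.len b := by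
  obtain ⟨c, hc⟩ := h
  rw [S.len_mul a c b hc]
  exact Nat.le_add_right _ _

lemma eq_of_leftDvd_of_len_le {a b : P} (h : S.leftDvd a b) (hlen : S.len b ≤ S.len a) :
    b = a := by
  obtain ⟨c, hc⟩ := h
  have hc1 : c = S.one := by
    by_contra hc1
    have := S.len_pos c hc1
    have := S.len_mul a c b hc
    omega
  subst hc1
  exact Option.some.inj (hc.symm.trans (S.mul_one a))

lemma exists_mul_leftDvd_of_leftDvd {t x y w : P} (h : S.leftDvd x y) (hty : S.mul t y = some w) :
    ∃ tx, S.mul t x = some tx ∧ S.leftDvd tx w := by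
  obtain ⟨z, hz⟩ := h
  obtain ⟨tx, htx, htxz⟩ := exists_assoc_left hz hty
  exact ⟨tx, htx, z, htxz⟩

lemma mul_leftDvd_mul_left {t x y tx ty : P} (htx : S.mul t x = some tx)
    (hty : S.mul t y = some ty) (h : S.leftDvd x y) : S.leftDvd tx ty := by
  obtain ⟨tx', htx', hdvd⟩ := exists_mul_leftDvd_of_leftDvd h hty
  rwa [Option.some.inj (htx'.symm.trans htx)] at hdvd

lemma ι_mul {a b c : P} (h : S.mul a b = some c) : S.ι a * S.ι b = S.ι c := by
  show (conGen S.rel).mk' (FreeMonoid.of a) * (conGen S.rel).mk' (FreeMonoid.of b) = _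
  rw [← map_mul]
  exact (Con.eq _).2 (ConGen.Rel.of _ _ ⟨a, b, c, h, rfl, rfl⟩)

lemma exists_atom_leftDvd {p : P} (hp : p ≠ S.one) : ∃ s ∈ S.atoms, S.leftDvd s p := by
  induction h : S.len p using Nat.strong_induction_on generalizing p with
  | _ n ih =>
  by_cases hpa : p ∈ S.atoms
  · exact ⟨p, hpa, leftDvd_refl p⟩
  simp only [atoms, Set.mem_ofPred_eq, not_and, not_forall, not_not] at hpa
  obtain ⟨x, y, hx, hy, hxy⟩ := hpa hp
  have := S.len_pos y hy
  have := S.len_mul x y p hxy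
  obtain ⟨s, hs, hsx⟩ := ih (S.len x) (by omega) hx rfl
  exact ⟨s, hs, leftDvd_trans hsx (leftDvd_of_mul hxy)⟩

lemma exists_common_leftDvd_len_max (a b : P) :
    ∃ g, S.leftDvd g a ∧ S.leftDvd g b ∧
      ∀ d, S.leftDvd d a → S.leftDvd d b → S.len d ≤ S.len g := by
  let lens : Set ℕ := {n | ∃ g, S.leftDvd g a ∧ S.leftDvd g b ∧ S.len g = n}
  have hne : lens.Nonempty := ⟨_, S.one, one_leftDvd a, one_leftDvd b, rfl⟩
  have hbdd : BddAbove lens := ⟨S.len a, by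
    rintro _ ⟨g, hga, -, rfl⟩
    exact len_le_of_leftDvd hga⟩
  obtain ⟨g, hga, hgb, hg⟩ := Nat.sSup_mem hne hbdd
  exact ⟨g, hga, hgb, fun d hda hdb => hg ▸ le_csSup hbdd ⟨d, hda, hdb, rfl⟩⟩

lemma IsRightLcm.symm {c d e : P} (h : S.IsRightLcm c d e) : S.IsRightLcm d c e :=
  ⟨h.2.1, h.1, fun m hd hc => h.2.2 m hc hd⟩

lemma isRightLcm_of_leftDvd {c d : P} (h : S.leftDvd c d) : S.IsRightLcm c d d :=
  ⟨h, leftDvd_refl d, fun _ _ hd => hd⟩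

lemma IsRightLcm.of_isRightLcm_of_forall_leftDvd {c d Δ x e : P} (hx : S.IsRightLcm c Δ x)
    (he : S.IsRightLcm x d e) (hΔ : ∀ m, S.leftDvd c m → S.leftDvd d m → S.leftDvd Δ m) :
    S.IsRightLcm c d e :=
  ⟨leftDvd_trans hx.1 he.1, he.2.1,
    fun m hc hd => he.2.2 m (hx.2.2 m hc (hΔ m hc hd)) hd⟩

end AtomicPartialProduct

namespace PreGarside

open AtomicPartialProduct

variable {P : Type*} {G : PreGarside P}

lemma mul_left_cancel {s x y p : P} (hx : G.mul s x = some p) (hy : G.mul s y = some p) :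
    x = y :=
  G.cancel_left _ x y (by rw [ι_mul hx, ι_mul hy])

lemma leftDvd_of_mul_leftDvd_mul {s x y p q : P} (hx : G.mul s x = some p)
    (hy : G.mul s y = some q) (h : G.leftDvd p q) : G.leftDvd x y := by
  obtain ⟨z, hz⟩ := h
  obtain ⟨f, hxz, hsf⟩ := exists_assoc_right hx hz
  exact ⟨z, mul_left_cancel hsf hy ▸ hxz⟩

lemma IsRightLcm.mul_left {t x y e tx ty te : P} (h : G.IsRightLcm x y e)
    (htx : G.mul t x = some tx) (hty : G.mul t y = some ty) (hte : G.mul t e = some te) :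
    G.IsRightLcm tx ty te := by
  refine ⟨mul_leftDvd_mul_left htx hte h.1, mul_leftDvd_mul_left hty hte h.2.1,
    fun m hxm hym => ?_⟩
  obtain ⟨m', htm'⟩ := leftDvd_trans (leftDvd_of_mul htx) hxm
  exact mul_leftDvd_mul_left hte htm' <|
    h.2.2 m' (leftDvd_of_mul_leftDvd_mul htx htm' hxm) (leftDvd_of_mul_leftDvd_mul hty htm' hym)

lemma exists_isRightLcm_of_common_prefix {t c d m m' : P} (htm : G.mul t m' = some m)
    (hlcm : ∀ x y, G.leftDvd x m' → G.leftDvd y m' → ∃ e, G.IsRightLcm x y e)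
    (htc : G.leftDvd t c) (htd : G.leftDvd t d) (hcm : G.leftDvd c m) (hdm : G.leftDvd d m) :
    ∃ e, G.IsRightLcm c d e := by
  obtain ⟨c', htc'⟩ := htc
  obtain ⟨d', htd'⟩ := htd
  have hc'm' := leftDvd_of_mul_leftDvd_mul htc' htm hcm
  have hd'm' := leftDvd_of_mul_leftDvd_mul htd' htm hdm
  obtain ⟨e', he'⟩ := hlcm c' d' hc'm' hd'm'
  obtain ⟨e, hte', -⟩ := exists_mul_leftDvd_of_leftDvd (he'.2.2 m' hc'm' hd'm') htm
  exact ⟨e, IsRightLcm.mul_left he' htc' htd' hte'⟩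

theorem exists_isRightLcm_of_common_multiple {c d m : P} (hcm : G.leftDvd c m)
    (hdm : G.leftDvd d m) : ∃ e, G.IsRightLcm c d e := by
  induction h : G.len m using Nat.strong_induction_on generalizing c d m with
  | _ n ih =>
  by_cases hc : c = G.one
  · exact ⟨d, isRightLcm_of_leftDvd (hc ▸ one_leftDvd d)⟩
  by_cases hd : d = G.one
  · exact ⟨c, (isRightLcm_of_leftDvd (hd ▸ one_leftDvd c)).symm⟩
  obtain ⟨s, hs, hsc⟩ := exists_atom_leftDvd hc
  obtain ⟨t, ht, htd⟩ := exists_atom_leftDvd hd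
  have hsm := leftDvd_trans hsc hcm
  have htm := leftDvd_trans htd hdm
  obtain ⟨Δ, hΔ⟩ := G.lcm_right s hs t ht ⟨m, hsm, htm⟩
  have hΔm := hΔ.2.2 m hsm htm
  have hlcm_below {u : P} (hu : u ∈ G.atoms) (hum : G.leftDvd u m) :
      ∃ m', G.mul u m' = some m ∧
        ∀ x y, G.leftDvd x m' → G.leftDvd y m' → ∃ e, G.IsRightLcm x y e := by
    obtain ⟨m', hum'⟩ := hum
    have := G.len_pos u hu.1
    have := G.len_mul u m' m hum'
    exact ⟨m', hum', fun x y hx hy => ih (G.len m') (by omega) hx hy rfl⟩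
  obtain ⟨ms, hsms, hlcm_s⟩ := hlcm_below hs hsm
  obtain ⟨x, hx⟩ := exists_isRightLcm_of_common_prefix hsms hlcm_s hsc hΔ.1 hcm hΔm
  obtain ⟨mt, htmt, hlcm_t⟩ := hlcm_below ht htm
  obtain ⟨e, he⟩ := exists_isRightLcm_of_common_prefix htmt hlcm_t
    (leftDvd_trans hΔ.2.1 hx.2.1) htd (hx.2.2 m hcm hΔm) hdm
  exact ⟨e, hx.of_isRightLcm_of_forall_leftDvd he fun m' hcm' hdm' =>
    hΔ.2.2 m' (leftDvd_trans hsc hcm') (leftDvd_trans htd hdm')⟩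

end PreGarside

/-- In a pre-Garside structure, any two elements of `P` have a left gcd in `P`. -/
theorem exists_left_gcd {P : Type*} (G : PreGarside P) (a b : P) :
    ∃ g : P, G.toAtomicPartialProduct.leftDvd g a ∧ G.toAtomicPartialProduct.leftDvd g b ∧
      ∀ d : P, G.toAtomicPartialProduct.leftDvd d a → G.toAtomicPartialProduct.leftDvd d b →
        G.toAtomicPartialProduct.leftDvd d g := by
  obtain ⟨g, hga, hgb, hmax⟩ :=
    AtomicPartialProduct.exists_common_leftDvd_len_max (S := G.toAtomicPartialProduct) a b
  refine ⟨g, hga, hgb, fun d hda hdb => ?_⟩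
  obtain ⟨e, hde, hge, hmin⟩ := PreGarside.exists_isRightLcm_of_common_multiple hda hga
  have heg : e = g :=
    AtomicPartialProduct.eq_of_leftDvd_of_len_le hge (hmax e (hmin a hda hga) (hmin b hdb hgb))
  exact heg ▸ hde
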